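/- Under the operator setup below, with a square root p of q and α satisfying the same hypothesis as in the determination of the set N (either α = 0, or α ≠ 0 and α²(q−q⁻¹)² ≠ −(p^j + p^{−j})² for all integers j ≥ 0), suppose λ = ε·q^{−l} belongs to N, where ε ∈ {1, −1} and l ∈ ℕ₀ and N = {λ ≠ 0 : φ^m(ψ(0,λ)) = 0 for some m ≥ 1}. Then: φ'(ψ(0,λ)) = 0; φ^{l+1}(ψ(0,λ)) = 0 and φ^{l}(ψ(0,λ)) ≠ 0; the subspace V_λ = span{φ^{j}(ψ(0,λ)) : 0 ≤ j ≤ l} has dimension l+1 and is invariant under φ, φ' and κ; and V_λ is simple, i.e. the only subspaces of V_λ invariant under all of φ, φ' and κ are 0 and V_λ. -/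

import Mathlib

noncomputable section

/-- The vector space with basis `ψ(l,λ)`, `l ∈ ℕ₀`, `λ ∈ ℂ∖{0}`. -/
abbrev Wsp : Type := (ℕ × ℂˣ) →₀ ℂ

/-- The basis vector `ψ(l,λ)`. -/
def psi (l : ℕ) (u : ℂˣ) : Wsp := Finsupp.single (l, u) 1

/-- The q-number `[l] = (q^l − q^(−l))/(q − q⁻¹)`. -/
def qnum (q : ℂˣ) (l : ℕ) : ℂ := ((q : ℂ) ^ l - (q : ℂ)⁻¹ ^ l) / ((q : ℂ) - (q : ℂ)⁻¹)

/-- `φ(ψ(l,λ)) = −(q^l[l]/(q−q⁻¹))·ψ(l−1, q²λ) + αq(q^(2l) − λ)·ψ(l, q²λ)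
  + q²(q^(2l) − λ²)·ψ(l+1, q²λ)` (the `ψ(l−1,·)` term has coefficient `[0] = 0` for `l = 0`). -/
def phi (q : ℂˣ) (α : ℂ) : Wsp →ₗ[ℂ] Wsp :=
  Finsupp.lsum ℂ fun i => LinearMap.toSpanSingleton ℂ Wsp
    ((-((q : ℂ) ^ i.1 * qnum q i.1 / ((q : ℂ) - (q : ℂ)⁻¹))) • psi (i.1 - 1) (q ^ 2 * i.2) +
     (α * (q : ℂ) * ((q : ℂ) ^ (2 * i.1) - (i.2 : ℂ))) • psi i.1 (q ^ 2 * i.2) +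
     ((q : ℂ) ^ 2 * ((q : ℂ) ^ (2 * i.1) - (i.2 : ℂ) ^ 2)) • psi (i.1 + 1) (q ^ 2 * i.2))

/-- `φ'(ψ(l,λ)) = λ⁻¹·(q^(1−l)[l]/(q−q⁻¹))·ψ(l−1, q⁻²λ)`. -/
def phi' (q : ℂˣ) : Wsp →ₗ[ℂ] Wsp :=
  Finsupp.lsum ℂ fun i => LinearMap.toSpanSingleton ℂ Wsp
    ((((i.2 : ℂ))⁻¹ * ((q : ℂ) ^ ((1 : ℤ) - (i.1 : ℤ)) * qnum q i.1 / ((q : ℂ) - (q : ℂ)⁻¹))) •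
      psi (i.1 - 1) ((q ^ 2)⁻¹ * i.2))

/-- `κ(ψ(l,λ)) = λ·ψ(l,λ)`. -/
def kappa : Wsp →ₗ[ℂ] Wsp :=
  Finsupp.lsum ℂ fun i => LinearMap.toSpanSingleton ℂ Wsp (((i.2 : ℂ)) • psi i.1 i.2)

/-- `κ⁻¹(ψ(l,λ)) = λ⁻¹·ψ(l,λ)`. -/
def kappaInv : Wsp →ₗ[ℂ] Wsp :=
  Finsupp.lsum ℂ fun i => LinearMap.toSpanSingleton ℂ Wsp (((i.2 : ℂ))⁻¹ • psi i.1 i.2)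

/-!
The vectors `v j = φ^j ψ(0,λ)` are κ-eigenvectors with the distinct eigenvalues `q^(2j) λ`,
because `κ φ = q² φ κ`. The relation `φ' φ - φ φ' = (κ⁻¹ - κ)/(q - q⁻¹)` and `φ' ψ(0,λ) = 0`
give `φ' v j = c j • v (j - 1)` with `c j = ε [j] [l + 1 - j]` (`lowerCoeff`), which vanishes
only for `j = 0` and `j = l + 1`. Applying `φ'` to the first vanishing `v m` therefore forces
`m = l + 1`. Distinct eigenvalues make `v 0, …, v l` independent and force every κ-invariant
subspace of their span to contain one of them; from there `φ'` (the `c j` being nonzero) leads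
down to `v 0` and `φ` back up to every `v j`.
-/

theorem Submodule.mem_of_sum_mem_of_eigenvectors {K M ι : Type*} [Field K] [AddCommGroup M]
    [Module K M] {f : Module.End K M} {p : Submodule K M}
    (hp : ∀ x ∈ p, f x ∈ p) {μ : ι → K} {s : Finset ι} (hμ : Set.InjOn μ s) {w : ι → M}
    (hw : ∀ i ∈ s, f (w i) = μ i • w i) (hsum : ∑ i ∈ s, w i ∈ p) : ∀ i ∈ s, w i ∈ p := by
  classical
  induction s using Finset.induction_on generalizing w with
  | empty => simp
  | insert a s ha ih =>
    have hμa : ∀ i ∈ s, μ i - μ a ≠ 0 := fun i hi => sub_ne_zero.2 fun h =>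
      ha (hμ (Finset.mem_insert_of_mem hi) (Finset.mem_insert_self a s) h ▸ hi)
    -- `f - μ a` kills `w a` and rescales the other summands
    have hshift : ∑ i ∈ s, (μ i - μ a) • w i ∈ p := by
      have : ∑ i ∈ s, (μ i - μ a) • w i =
          f (∑ i ∈ insert a s, w i) - μ a • ∑ i ∈ insert a s, w i := by
        rw [map_sum, Finset.smul_sum, ← Finset.sum_sub_distrib, Finset.sum_insert ha,
          hw a (Finset.mem_insert_self a s), sub_self, zero_add]
        refine Finset.sum_congr rfl fun i hi => ?_
        rw [hw i (Finset.mem_insert_of_mem hi), sub_smul]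
      exact this ▸ p.sub_mem (hp _ hsum) (p.smul_mem _ hsum)
    have hs : ∀ i ∈ s, w i ∈ p := fun i hi =>
      (p.smul_mem_iff (hμa i hi)).1 <|
        ih (hμ.mono (Finset.coe_subset.2 (Finset.subset_insert a s)))
          (fun j hj => by rw [map_smul, hw j (Finset.mem_insert_of_mem hj), smul_comm]) hshift i hi
    intro i hi
    rcases Finset.mem_insert.1 hi with rfl | hi
    · rw [Finset.sum_insert ha] at hsum
      simpa using p.sub_mem hsum (p.sum_mem hs)
    · exact hs i hi

theorem Submodule.apply_mem_span_range {R M ι : Type*} [Semiring R] [AddCommMonoid M]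
    [Module R M] {f : M →ₗ[R] M} {v : ι → M} (h : ∀ i, f (v i) ∈ span R (Set.range v)) {x : M}
    (hx : x ∈ span R (Set.range v)) : f x ∈ span R (Set.range v) :=
  (span_le (p := (span R (Set.range v)).comap f)).2 (Set.forall_mem_range.2 h) hx

namespace PodlesSphere

variable {q : ℂˣ}

lemma pow_injective (hq : ∀ k : ℕ, 0 < k → (q : ℂ) ^ k ≠ 1) :
    Function.Injective fun n : ℕ => (q : ℂ) ^ n := by
  have : ¬IsOfFinOrder q := by
    rw [isOfFinOrder_iff_pow_eq_one]
    rintro ⟨n, hn, h⟩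
    exact hq n hn (by rw [← Units.val_pow_eq_pow_val, h, Units.val_one])
  exact fun m n h => injective_pow_iff_not_isOfFinOrder.2 this (Units.ext (by simpa using h))

lemma phi_psi (α : ℂ) (n : ℕ) (lam : ℂˣ) :
    phi q α (psi n lam) =
      (-((q : ℂ) ^ n * qnum q n / ((q : ℂ) - (q : ℂ)⁻¹))) • psi (n - 1) (q ^ 2 * lam) +
      (α * (q : ℂ) * ((q : ℂ) ^ (2 * n) - (lam : ℂ))) • psi n (q ^ 2 * lam) +
      ((q : ℂ) ^ 2 * ((q : ℂ) ^ (2 * n) - (lam : ℂ) ^ 2)) • psi (n + 1) (q ^ 2 * lam) := by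
  rw [phi, psi, Finsupp.lsum_single, LinearMap.toSpanSingleton_apply, one_smul]

lemma phi'_psi (n : ℕ) (lam : ℂˣ) :
    phi' q (psi n lam) =
      ((lam : ℂ)⁻¹ * ((q : ℂ) ^ ((1 : ℤ) - (n : ℤ)) * qnum q n / ((q : ℂ) - (q : ℂ)⁻¹))) •
        psi (n - 1) ((q ^ 2)⁻¹ * lam) := by
  rw [phi', psi, Finsupp.lsum_single, LinearMap.toSpanSingleton_apply, one_smul]

lemma kappa_psi (n : ℕ) (lam : ℂˣ) : kappa (psi n lam) = (lam : ℂ) • psi n lam := by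
  rw [kappa, psi, Finsupp.lsum_single, LinearMap.toSpanSingleton_apply, one_smul]
  rfl

lemma kappaInv_psi (n : ℕ) (lam : ℂˣ) : kappaInv (psi n lam) = (lam : ℂ)⁻¹ • psi n lam := by
  rw [kappaInv, psi, Finsupp.lsum_single, LinearMap.toSpanSingleton_apply, one_smul]
  rfl

lemma phi'_psi_zero (lam : ℂˣ) : phi' q (psi 0 lam) = 0 := by
  simp [phi'_psi, qnum]

lemma ext_psi {f g : Wsp →ₗ[ℂ] Wsp} (h : ∀ n lam, f (psi n lam) = g (psi n lam)) : f = g :=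
  Finsupp.lhom_ext fun i b => by
    rw [← mul_one b, ← smul_eq_mul, ← Finsupp.smul_single, map_smul, map_smul]
    exact congrArg _ (h i.1 i.2)

lemma kappaInv_kappa (x : Wsp) : kappaInv (kappa x) = x := by
  suffices h : kappaInv ∘ₗ kappa = LinearMap.id from LinearMap.congr_fun h x
  refine ext_psi fun n lam => ?_
  simp [kappa_psi, kappaInv_psi, smul_smul, lam.ne_zero]

lemma kappa_phi (α : ℂ) (x : Wsp) : kappa (phi q α x) = ((q : ℂ) ^ 2) • phi q α (kappa x) := by
  suffices h : kappa ∘ₗ phi q α = ((q : ℂ) ^ 2) • (phi q α ∘ₗ kappa) from LinearMap.congr_fun h x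
  refine ext_psi fun n lam => ?_
  simp only [LinearMap.comp_apply, LinearMap.smul_apply, phi_psi, kappa_psi, map_add, map_smul,
    smul_smul, Units.val_mul, Units.val_pow_eq_pow_val]
  match_scalars <;> ring

lemma phi'_phi (hq : ∀ k : ℕ, 0 < k → (q : ℂ) ^ k ≠ 1) (α : ℂ) (x : Wsp) :
    phi' q (phi q α x) = phi q α (phi' q x) +
      ((q : ℂ) - (q : ℂ)⁻¹)⁻¹ • (kappaInv x - kappa x) := by
  suffices h : phi' q ∘ₗ phi q α =
      phi q α ∘ₗ phi' q + ((q : ℂ) - (q : ℂ)⁻¹)⁻¹ • (kappaInv - kappa) from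
    LinearMap.congr_fun h x
  have hQ := q.ne_zero
  -- `field_simp` clears `q - q⁻¹` as `(q ^ 2 - 1) / q`
  have hq2 : (q : ℂ) ^ 2 - 1 ≠ 0 := sub_ne_zero.2 (hq 2 two_pos)
  refine ext_psi fun n lam => ?_
  cases n with
  | zero =>
    simp only [LinearMap.comp_apply, LinearMap.add_apply, LinearMap.smul_apply,
      LinearMap.sub_apply, phi_psi, phi'_psi, kappa_psi, kappaInv_psi, map_add, map_smul,
      smul_smul, inv_mul_cancel_left, smul_sub, qnum, Nat.zero_sub, zero_add]
    match_scalars <;> (simp only [zpow_sub₀ hQ, zpow_one, inv_pow]; field_simp; ring)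
  | succ m =>
    simp only [LinearMap.comp_apply, LinearMap.add_apply, LinearMap.smul_apply,
      LinearMap.sub_apply, phi_psi, phi'_psi, kappa_psi, kappaInv_psi, map_add, map_smul,
      smul_smul, inv_mul_cancel_left, mul_inv_cancel_left, smul_sub, qnum, Nat.add_sub_cancel]
    match_scalars <;>
      (simp only [zpow_sub₀ hQ, zpow_add₀ hQ, zpow_one, zpow_natCast, inv_pow]; field_simp; ring)

variable (q) (α : ℂ) (u : ℂˣ)

def vec (j : ℕ) : Wsp := ((phi q α : Module.End ℂ Wsp) ^ j) (psi 0 u)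

def weight (j : ℕ) : ℂ := (q : ℂ) ^ (2 * j) * u

def lowerCoeff (j : ℕ) : ℂ :=
  ∑ i ∈ Finset.range j, ((q : ℂ) - (q : ℂ)⁻¹)⁻¹ * ((weight q u i)⁻¹ - weight q u i)

def vecSpan (l : ℕ) : Submodule ℂ Wsp :=
  Submodule.span ℂ (Set.range fun j : Fin (l + 1) => vec q α u j)

variable {q α u}

lemma weight_injective (hq : ∀ k : ℕ, 0 < k → (q : ℂ) ^ k ≠ 1) :
    Function.Injective (weight q u) := fun i j h => by
  have := pow_injective hq (mul_right_cancel₀ u.ne_zero h)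
  omega

lemma lowerCoeff_succ (j : ℕ) : lowerCoeff q u (j + 1) =
    lowerCoeff q u j + ((q : ℂ) - (q : ℂ)⁻¹)⁻¹ * ((weight q u j)⁻¹ - weight q u j) :=
  Finset.sum_range_succ _ _

lemma vec_zero : vec q α u 0 = psi 0 u := rfl

lemma vec_succ (j : ℕ) : vec q α u (j + 1) = phi q α (vec q α u j) := by
  rw [vec, vec, pow_succ', Module.End.mul_apply]

lemma kappa_vec (j : ℕ) : kappa (vec q α u j) = weight q u j • vec q α u j := by
  induction j with
  | zero => simp [vec_zero, weight, kappa_psi]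
  | succ j ih =>
    rw [vec_succ, kappa_phi, ih, map_smul, smul_smul, weight, weight]
    ring_nf

lemma kappaInv_vec (j : ℕ) : kappaInv (vec q α u j) = (weight q u j)⁻¹ • vec q α u j := by
  have hμ : weight q u j ≠ 0 := mul_ne_zero (pow_ne_zero _ q.ne_zero) u.ne_zero
  conv_lhs => rw [← inv_smul_smul₀ hμ (vec q α u j), ← kappa_vec, map_smul, kappaInv_kappa]

lemma phi'_vec (hq : ∀ k : ℕ, 0 < k → (q : ℂ) ^ k ≠ 1) (j : ℕ) :
    phi' q (vec q α u j) = lowerCoeff q u j • vec q α u (j - 1) := by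
  induction j with
  | zero => simp [vec_zero, lowerCoeff, phi'_psi_zero]
  | succ j ih =>
    have hj : lowerCoeff q u j • phi q α (vec q α u (j - 1)) =
        lowerCoeff q u j • vec q α u j := by
      rcases j with _ | j
      · simp [lowerCoeff]
      · rw [Nat.add_sub_cancel, vec_succ]
    rw [vec_succ, phi'_phi hq, ih, map_smul, hj, kappaInv_vec, kappa_vec, Nat.add_sub_cancel,
      lowerCoeff_succ]
    module

lemma lowerCoeff_mul {l : ℕ} {ε : ℂ} (hε : ε ^ 2 = 1)
    (hu : (u : ℂ) = ε * (q : ℂ) ^ (-(l : ℤ))) (j : ℕ) :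
    lowerCoeff q u j * ((q : ℂ) - (q : ℂ)⁻¹) ^ 2 * (q : ℂ) ^ (2 * j) * (q : ℂ) ^ (l + 1) =
      ε * ((q : ℂ) ^ (2 * j) - 1) * ((q : ℂ) ^ (2 * (l + 1)) - (q : ℂ) ^ (2 * j)) := by
  have hε' : ε⁻¹ = ε := inv_eq_of_mul_eq_one_right (by rw [← sq, hε])
  induction j with
  | zero => simp [lowerCoeff]
  | succ j ih =>
    have hstep : ((q : ℂ) - (q : ℂ)⁻¹)⁻¹ * ((weight q u j)⁻¹ - weight q u j) *
        ((q : ℂ) - (q : ℂ)⁻¹) ^ 2 * (q : ℂ) ^ (2 * j) * (q : ℂ) ^ (l + 1) =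
        ε * ((q : ℂ) ^ 2 - 1) * ((q : ℂ) ^ (2 * l) - (q : ℂ) ^ (4 * j)) := by
      rw [weight, hu, zpow_neg, zpow_natCast, mul_inv, mul_inv, inv_inv, hε']
      field_simp
      ring
    rw [lowerCoeff_succ]
    linear_combination (q : ℂ) ^ 2 * ih + (q : ℂ) ^ 2 * hstep

lemma lowerCoeff_ne_zero {l : ℕ} {ε : ℂ} (hq : ∀ k : ℕ, 0 < k → (q : ℂ) ^ k ≠ 1)
    (hε : ε ^ 2 = 1) (hu : (u : ℂ) = ε * (q : ℂ) ^ (-(l : ℤ))) {j : ℕ} (hj₀ : j ≠ 0)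
    (hjl : j ≠ l + 1) : lowerCoeff q u j ≠ 0 := by
  intro h
  have h' := lowerCoeff_mul hε hu j
  rw [h, zero_mul, zero_mul, zero_mul, eq_comm] at h'
  rcases mul_eq_zero.1 h' with h' | h'
  · rcases mul_eq_zero.1 h' with rfl | h'
    · norm_num at hε
    · exact hq (2 * j) (by omega) (sub_eq_zero.1 h')
  · have := pow_injective hq (sub_eq_zero.1 h')
    omega

lemma find_vec_eq_zero {l : ℕ} {ε : ℂ} (hq : ∀ k : ℕ, 0 < k → (q : ℂ) ^ k ≠ 1)
    (hε : ε ^ 2 = 1) (hu : (u : ℂ) = ε * (q : ℂ) ^ (-(l : ℤ))) (hN : ∃ m, vec q α u m = 0) :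
    Nat.find hN = l + 1 := by
  have h₀ : Nat.find hN ≠ 0 := fun h => by
    have := Nat.find_spec hN
    rw [h, vec_zero, psi] at this
    exact one_ne_zero (Finsupp.single_eq_zero.1 this)
  by_contra hne
  have := phi'_vec (α := α) (u := u) hq (Nat.find hN)
  rw [Nat.find_spec hN, map_zero, eq_comm] at this
  exact smul_ne_zero (lowerCoeff_ne_zero hq hε hu h₀ hne) (Nat.find_min hN (by omega)) this

lemma setOf_eq_range (l : ℕ) :
    {x : Wsp | ∃ j : ℕ, j ≤ l ∧ x = ((phi q α : Module.End ℂ Wsp) ^ j) (psi 0 u)} =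
      Set.range fun j : Fin (l + 1) => vec q α u j := by
  ext x
  constructor
  · rintro ⟨j, hj, rfl⟩
    exact ⟨⟨j, by omega⟩, rfl⟩
  · rintro ⟨j, rfl⟩
    exact ⟨j, by omega, rfl⟩

lemma vec_mem_vecSpan {l j : ℕ} (hj : j ≤ l) : vec q α u j ∈ vecSpan q α u l :=
  Submodule.subset_span ⟨⟨j, by omega⟩, rfl⟩

lemma phi_mem_vecSpan {l : ℕ} (hl : vec q α u (l + 1) = 0) {x : Wsp}
    (hx : x ∈ vecSpan q α u l) : phi q α x ∈ vecSpan q α u l := by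
  refine Submodule.apply_mem_span_range (fun j => ?_) hx
  rw [← vec_succ]
  rcases (Nat.lt_succ_iff.1 j.2).lt_or_eq with hj | hj
  · exact vec_mem_vecSpan hj
  · rw [hj, hl]
    exact Submodule.zero_mem _

lemma phi'_mem_vecSpan (hq : ∀ k : ℕ, 0 < k → (q : ℂ) ^ k ≠ 1) {l : ℕ} {x : Wsp}
    (hx : x ∈ vecSpan q α u l) : phi' q x ∈ vecSpan q α u l := by
  refine Submodule.apply_mem_span_range (fun j => ?_) hx
  rw [phi'_vec hq]
  exact Submodule.smul_mem _ _ (vec_mem_vecSpan (by omega))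

lemma kappa_mem_vecSpan {l : ℕ} {x : Wsp} (hx : x ∈ vecSpan q α u l) :
    kappa x ∈ vecSpan q α u l := by
  refine Submodule.apply_mem_span_range (fun j => ?_) hx
  rw [kappa_vec]
  exact Submodule.smul_mem _ _ (vec_mem_vecSpan (by omega))

lemma finrank_vecSpan (hq : ∀ k : ℕ, 0 < k → (q : ℂ) ^ k ≠ 1) {l : ℕ}
    (hne : ∀ j ≤ l, vec q α u j ≠ 0) : Module.finrank ℂ (vecSpan q α u l) = l + 1 := by
  have hind : LinearIndependent ℂ fun j : Fin (l + 1) => vec q α u j :=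
    Module.End.eigenvectors_linearIndependent' kappa (fun j : Fin (l + 1) => weight q u j)
      ((weight_injective hq).comp Fin.val_injective) _
      fun j => Module.End.hasEigenvector_iff.2
        ⟨Module.End.mem_eigenspace_iff.2 (kappa_vec j), hne j (by omega)⟩
  rw [vecSpan, finrank_span_eq_card hind, Fintype.card_fin]

lemma exists_vec_mem (hq : ∀ k : ℕ, 0 < k → (q : ℂ) ^ k ≠ 1) {l : ℕ} {U : Submodule ℂ Wsp}
    (hUV : U ≤ vecSpan q α u l) (hκ : ∀ x ∈ U, kappa x ∈ U) (hU : U ≠ ⊥) :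
    ∃ j ≤ l, vec q α u j ∈ U := by
  obtain ⟨x, hxU, hx₀⟩ := U.ne_bot_iff.1 hU
  obtain ⟨t, rfl⟩ := (Submodule.mem_span_range_iff_exists_fun ℂ).1 (hUV hxU)
  obtain ⟨j, -, hj⟩ := Finset.exists_ne_zero_of_sum_ne_zero hx₀
  have := U.mem_of_sum_mem_of_eigenvectors hκ (μ := fun j : Fin (l + 1) => weight q u j)
    ((weight_injective hq).comp Fin.val_injective).injOn
    (fun j _ => by rw [map_smul, kappa_vec, smul_comm]) hxU j (Finset.mem_univ j)
  exact ⟨j, by omega, (U.smul_mem_iff (left_ne_zero_of_smul hj)).1 this⟩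

lemma vecSpan_le_of_vec_mem {l : ℕ} {ε : ℂ} (hq : ∀ k : ℕ, 0 < k → (q : ℂ) ^ k ≠ 1)
    (hε : ε ^ 2 = 1) (hu : (u : ℂ) = ε * (q : ℂ) ^ (-(l : ℤ))) {U : Submodule ℂ Wsp}
    (hφ : ∀ x ∈ U, phi q α x ∈ U) (hφ' : ∀ x ∈ U, phi' q x ∈ U) {i : ℕ} (hi : i ≤ l)
    (hU : vec q α u i ∈ U) : vecSpan q α u l ≤ U := by
  have h₀ : vec q α u 0 ∈ U := by
    induction i with
    | zero => exact hU
    | succ i ih =>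
      refine ih (by omega) ((U.smul_mem_iff (lowerCoeff_ne_zero hq hε hu i.succ_ne_zero
        (by omega))).1 ?_)
      simpa only [phi'_vec hq, Nat.add_sub_cancel] using hφ' _ hU
  have hall : ∀ j, vec q α u j ∈ U := fun j => by
    induction j with
    | zero => exact h₀
    | succ j ih => exact vec_succ j ▸ hφ _ ih
  exact Submodule.span_le.2 (Set.range_subset_iff.2 fun j => hall j)

end PodlesSphere

open PodlesSphere in
theorem stmt16 (q : ℂˣ) (hq' : ∀ k : ℕ, 0 < k → (q : ℂ) ^ k ≠ 1)
    (α : ℂ)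
    (l : ℕ) (ε : ℂ) (hε : ε = 1 ∨ ε = -1)
    (u : ℂˣ) (hu : (u : ℂ) = ε * (q : ℂ) ^ (-(l : ℤ)))
    (hN : ∃ m : ℕ, 0 < m ∧ ((phi q α : Module.End ℂ Wsp) ^ m) (psi 0 u) = 0) :
    phi' q (psi 0 u) = 0 ∧
    ((phi q α : Module.End ℂ Wsp) ^ (l + 1)) (psi 0 u) = 0 ∧
    ((phi q α : Module.End ℂ Wsp) ^ l) (psi 0 u) ≠ 0 ∧
    (let Vl : Submodule ℂ Wsp := Submodule.span ℂ
      {x : Wsp | ∃ j : ℕ, j ≤ l ∧ x = ((phi q α : Module.End ℂ Wsp) ^ j) (psi 0 u)}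
    Module.finrank ℂ Vl = l + 1 ∧
    (∀ x ∈ Vl, phi q α x ∈ Vl) ∧ (∀ x ∈ Vl, phi' q x ∈ Vl) ∧ (∀ x ∈ Vl, kappa x ∈ Vl) ∧
    ∀ U : Submodule ℂ Wsp, U ≤ Vl →
      (∀ x ∈ U, phi q α x ∈ U) → (∀ x ∈ U, phi' q x ∈ U) → (∀ x ∈ U, kappa x ∈ U) →
      U = ⊥ ∨ U = Vl) := by
  have hε2 : ε ^ 2 = 1 := by rcases hε with rfl | rfl <;> norm_num
  have hN' : ∃ m, vec q α u m = 0 := hN.imp fun _ => And.right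
  have hlast : vec q α u (l + 1) = 0 := find_vec_eq_zero hq' hε2 hu hN' ▸ Nat.find_spec hN'
  have hne : ∀ j ≤ l, vec q α u j ≠ 0 := fun j hj =>
    Nat.find_min hN' (by rw [find_vec_eq_zero hq' hε2 hu hN']; omega)
  refine ⟨phi'_psi_zero u, hlast, hne l le_rfl, ?_⟩
  rw [setOf_eq_range]
  refine ⟨finrank_vecSpan hq' hne, fun _ => phi_mem_vecSpan hlast, fun _ => phi'_mem_vecSpan hq',
    fun _ => kappa_mem_vecSpan, fun U hUV hφ hφ' hκ => ?_⟩
  refine or_iff_not_imp_left.2 fun hU => le_antisymm hUV ?_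
  obtain ⟨j, hj, hjU⟩ := exists_vec_mem hq' hUV hκ hU
  exact vecSpan_le_of_vec_mem hq' hε2 hu hφ hφ' hj hjU
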